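/- Let k ≥ 2, P ≥ 1, and for 1 ≤ i ≤ P let h_i ≥ 0 and 1 ≤ b_i ≤ k−1 with b_1·k^{h_1} ≤ b_2·k^{h_2} ≤ ⋯ ≤ b_P·k^{h_P}. Then the maximum number of steals from the multiset {ACT(b_1, k, h_1), …, ACT(b_P, k, h_P)} equals ∑_{i=1}^{P} Φ_R(ACT(b_i, k, h_i), i−1). -/

import Mathlib

/-- A rooted tree: a root with a finite ordered list of children. -/
inductive RTree : Type
  | node : List RTree → RTree

/-- A rooted computation tree: no node has exactly one child. -/
inductive RTree.Valid : RTree → Prop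
  | mk (cs : List RTree) (hlen : cs.length ≠ 1) (hc : ∀ c ∈ cs, RTree.Valid c) :
      RTree.Valid (RTree.node cs)

/-- A steal step on a multiset of rooted computation trees: choose an arbitrary tree `U`
and a tree whose root has children `cs ++ [c]` (at least two children); the stolen subtree
is the last child `c`, and the remainder is the root with the other children if there were
more than two, or the single other child if there were exactly two. -/
def RStealStep (S S' : Multiset RTree) : Prop :=
  ∃ (U c : RTree) (cs : List RTree) (S₀ : Multiset RTree),
    S = U ::ₘ RTree.node (cs ++ [c]) ::ₘ S₀ ∧
      ((∃ a, cs = [a] ∧ S' = a ::ₘ c ::ₘ S₀) ∨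
        (2 ≤ cs.length ∧ S' = RTree.node cs ::ₘ c ::ₘ S₀))

/-- `RStealSeq n S` means there exists a sequence of `n` steal steps starting from `S`. -/
def RStealSeq : ℕ → Multiset RTree → Prop
  | 0, _ => True
  | n + 1, S => ∃ S', RStealStep S S' ∧ RStealSeq n S'

/-- The maximum length of a sequence of steal steps starting from `S`. -/
noncomputable def stealsR (S : Multiset RTree) : ℕ :=
  sSup {n | RStealSeq n S}

/-- The `n`-th potential of a rooted computation tree `T`. -/
noncomputable def PhiR (T : RTree) (n : ℕ) : ℕ :=
  stealsR (T ::ₘ Multiset.replicate n (RTree.node []))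

/-- The complete `k`-ary tree of height `h`. -/
def CKT (k : ℕ) : ℕ → RTree
  | 0 => RTree.node []
  | h + 1 => RTree.node (List.replicate k (CKT k h))

/-- The almost complete `k`-ary tree with `b · k^h` leaves: the complete `k`-ary tree
of height `h` if `b = 1`, and a root with `b` children each equal to `CKT k h` if `b ≥ 2`. -/
def ACT (b k h : ℕ) : RTree :=
  if b = 1 then CKT k h else RTree.node (List.replicate b (CKT k h))

/-!
Encode `ACT b k h` (`1 ≤ b < k`) by the code `K = k * h + b`: the codes are the numbers not
divisible by `k`, and `K` increases with the number of leaves `b * k ^ h`. A steal from the tree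
of code `K ≠ 1` leaves the trees of codes `remCode k K` (the next smaller code) and
`stolenCode k K` (a complete tree).

For `K = k * m + j`, the sum
`phiCode k K n = ∑_{t<n} ((j-1) C(m,t) (k-1)^t + C(m,t+1) (k-1)^(t+1))` obeys the steal recursion
`phiCode K (n+1) = phiCode (stolenCode K) n + phiCode (remCode K) (n+1) + 1`.
Its increments in `n` grow with `K`, so `∑ᵢ phiCode Kᵢ i` is largest when the codes are listed
in increasing order. This sorted sum drops by at least one with every steal (the remainder and the
stolen tree take the places of the victim and the thief), and it is attained by exhausting the
trees one after another in increasing order, each using all trees created so far as thieves.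
-/

namespace RTree

/-- Stealing from `T` leaves the remainder `r` and the stolen subtree `s`. -/
def Steal (T r s : RTree) : Prop :=
  ∃ cs : List RTree, T = node (cs ++ [s]) ∧ (cs = [r] ∨ 2 ≤ cs.length ∧ r = node cs)

theorem Steal.unique {T r s r' s' : RTree} (h : T.Steal r s) (h' : T.Steal r' s') :
    r = r' ∧ s = s' := by
  obtain ⟨cs, rfl, hr⟩ := h
  obtain ⟨cs', hT, hr'⟩ := h'
  obtain ⟨rfl, hs⟩ := List.append_inj' (node.inj hT) rfl
  refine ⟨?_, List.singleton_inj.1 hs⟩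
  rcases hr with rfl | ⟨hlen, rfl⟩ <;> rcases hr' with h | ⟨hlen', rfl⟩ <;> simp_all

theorem not_steal_leaf (r s : RTree) : ¬ (node []).Steal r s := by
  rintro ⟨cs, h, -⟩
  simp at h

end RTree

theorem rStealStep_iff {S S' : Multiset RTree} :
    RStealStep S S' ↔
      ∃ U T r s S₀, S = U ::ₘ T ::ₘ S₀ ∧ T.Steal r s ∧ S' = r ::ₘ s ::ₘ S₀ := by
  constructor
  · rintro ⟨U, s, cs, S₀, rfl, ⟨r, rfl, rfl⟩ | ⟨hlen, rfl⟩⟩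
    · exact ⟨U, _, r, s, S₀, rfl, ⟨[r], rfl, Or.inl rfl⟩, rfl⟩
    · exact ⟨U, _, _, s, S₀, rfl, ⟨cs, rfl, Or.inr ⟨hlen, rfl⟩⟩, rfl⟩
  · rintro ⟨U, _, r, s, S₀, rfl, ⟨cs, rfl, rfl | ⟨hlen, rfl⟩⟩, rfl⟩
    · exact ⟨U, s, [r], S₀, rfl, Or.inl ⟨r, rfl, rfl⟩⟩
    · exact ⟨U, s, cs, S₀, rfl, Or.inr ⟨hlen, rfl⟩⟩

@[simp]
theorem ACT_one (k h : ℕ) : ACT 1 k h = CKT k h := if_pos rfl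

theorem ACT_succ_steal {b : ℕ} (k h : ℕ) (hb : 1 ≤ b) :
    (ACT (b + 1) k h).Steal (ACT b k h) (CKT k h) := by
  refine ⟨List.replicate b (CKT k h), ?_, ?_⟩
  · rw [ACT, if_neg (by omega), List.replicate_succ']
  · rcases eq_or_lt_of_le hb with rfl | hb2
    · left; simp
    · right; exact ⟨by simp; omega, by rw [ACT, if_neg (by omega)]⟩

theorem CKT_succ_steal {k : ℕ} (hk : 2 ≤ k) (h : ℕ) :
    (CKT k (h + 1)).Steal (ACT (k - 1) k h) (CKT k h) := by
  have hCKT : CKT k (h + 1) = ACT (k - 1 + 1) k h := by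
    rw [Nat.sub_add_cancel (by omega), ACT, if_neg (by omega), CKT]
  rw [hCKT]
  exact ACT_succ_steal k h (by omega)

theorem List.exists_eq_append_cons_append_cons_of_pairwise {α : Type*} [LinearOrder α]
    {l : List α} {a b : α} {D : Multiset α} (hl : l.Pairwise (· ≤ ·)) (hab : a ≤ b)
    (hlD : (l : Multiset α) = a ::ₘ b ::ₘ D) : ∃ A C B, l = A ++ a :: (C ++ b :: B) := by
  have ha : a ∈ l := by simp [← Multiset.mem_coe, hlD]
  obtain ⟨A, L, rfl⟩ := List.append_of_mem ha
  have hb : b ∈ A ++ L := by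
    rw [Multiset.coe_eq_coe.2 List.perm_middle, ← Multiset.cons_coe,
      Multiset.cons_inj_right] at hlD
    simp [← Multiset.mem_coe, hlD]
  rcases List.mem_append.1 hb with hbA | hbL
  · obtain ⟨A₁, A₂, rfl⟩ := List.append_of_mem hbA
    obtain rfl : a = b :=
      hab.antisymm ((List.pairwise_append.1 hl).2.2 b (by simp) a List.mem_cons_self)
    exact ⟨A₁, A₂, L, by simp⟩
  · obtain ⟨C, B, rfl⟩ := List.append_of_mem hbL
    exact ⟨A, C, B, rfl⟩

section

variable {k : ℕ}

theorem mul_add_mod_of_lt {m j : ℕ} (hj : j < k) : (k * m + j) % k = j := by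
  rw [Nat.mul_add_mod, Nat.mod_eq_of_lt hj]

theorem mul_add_div_of_lt {m j : ℕ} (hj : j < k) : (k * m + j) / k = m := by
  rw [Nat.mul_add_div (by omega), Nat.div_eq_of_lt hj, add_zero]

def actOf (k K : ℕ) : RTree := ACT (K % k) k (K / k)

theorem actOf_mul_add {m j : ℕ} (hj : j < k) : actOf k (k * m + j) = ACT j k m := by
  rw [actOf, mul_add_mod_of_lt hj, mul_add_div_of_lt hj]

theorem actOf_one (hk : 2 ≤ k) : actOf k 1 = RTree.node [] := by
  simpa [CKT] using actOf_mul_add (k := k) (m := 0) (j := 1) (by omega)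

def remCode (k K : ℕ) : ℕ := if K % k = 1 then K - 2 else K - 1

def stolenCode (k K : ℕ) : ℕ := k * ((K - 2) / k) + 1

theorem code_cases (hk : 2 ≤ k) {K : ℕ} (hK : K % k ≠ 0) (hK1 : K ≠ 1) :
    (∃ m j, 2 ≤ j ∧ j < k ∧ K = k * m + j ∧
      remCode k K = k * m + (j - 1) ∧ stolenCode k K = k * m + 1) ∨
    (∃ m, K = k * (m + 1) + 1 ∧
      remCode k K = k * m + (k - 1) ∧ stolenCode k K = k * m + 1) := by
  have hdiv := Nat.div_add_mod K k
  have hmod : K % k < k := Nat.mod_lt _ (by omega)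
  by_cases hj : 2 ≤ K % k
  · refine Or.inl ⟨K / k, K % k, hj, hmod, hdiv.symm, ?_, ?_⟩
    · rw [remCode, if_neg (by omega)]; omega
    · rw [stolenCode, show K - 2 = k * (K / k) + (K % k - 2) by omega,
        mul_add_div_of_lt (by omega)]
  · obtain ⟨m, hm⟩ : ∃ m, K / k = m + 1 := Nat.exists_eq_add_one.2 <| by
      rcases Nat.eq_zero_or_pos (K / k) with h0 | h0
      · rw [h0] at hdiv; omega
      · exact h0
    rw [hm, mul_add_one] at hdiv
    refine Or.inr ⟨m, by rw [mul_add_one]; omega, ?_, ?_⟩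
    · rw [remCode, if_pos (by omega)]; omega
    · rw [stolenCode, show K - 2 = k * m + (k - 1) by omega, mul_add_div_of_lt (by omega)]

section Steal

variable (hk : 2 ≤ k) {K : ℕ} (hK : K % k ≠ 0) (hK1 : K ≠ 1)
include hk hK hK1

theorem remCode_lt : remCode k K < K := by
  rcases code_cases hk hK hK1 with ⟨m, j, hj, hjk, rfl, hr, -⟩ | ⟨m, rfl, hr, -⟩
  · omega
  · rw [hr, mul_add_one]; omega

theorem stolenCode_lt : stolenCode k K < K := by
  rcases code_cases hk hK hK1 with ⟨m, j, hj, hjk, rfl, -, hs⟩ | ⟨m, rfl, -, hs⟩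
  · omega
  · rw [hs, mul_add_one]; omega

theorem stolenCode_le_remCode : stolenCode k K ≤ remCode k K := by
  rcases code_cases hk hK hK1 with ⟨m, j, hj, hjk, -, hr, hs⟩ | ⟨m, -, hr, hs⟩ <;> omega

theorem remCode_mod_ne_zero : remCode k K % k ≠ 0 := by
  rcases code_cases hk hK hK1 with ⟨m, j, hj, hjk, -, hr, -⟩ | ⟨m, -, hr, -⟩ <;>
    rw [hr, mul_add_mod_of_lt (by omega)] <;> omega

theorem stolenCode_mod_ne_zero : stolenCode k K % k ≠ 0 := by
  rcases code_cases hk hK hK1 with ⟨m, -, -, -, -, -, hs⟩ | ⟨m, -, -, hs⟩ <;>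
    rw [hs, mul_add_mod_of_lt (by omega)] <;> omega

theorem actOf_steal : (actOf k K).Steal (actOf k (remCode k K)) (actOf k (stolenCode k K)) := by
  rcases code_cases hk hK hK1 with ⟨m, j, hj, hjk, rfl, hr, hs⟩ | ⟨m, rfl, hr, hs⟩
  · rw [hr, hs, actOf_mul_add hjk, actOf_mul_add (by omega), actOf_mul_add (by omega), ACT_one]
    simpa [Nat.sub_add_cancel (show 1 ≤ j by omega)] using
      ACT_succ_steal (b := j - 1) k m (by omega)
  · rw [hr, hs, actOf_mul_add (by omega), actOf_mul_add (by omega), actOf_mul_add (by omega),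
      ACT_one, ACT_one]
    exact CKT_succ_steal hk m

end Steal

def phiIncr (k K t : ℕ) : ℕ :=
  (K % k - 1) * ((K / k).choose t * (k - 1) ^ t) + (K / k).choose (t + 1) * (k - 1) ^ (t + 1)

def phiCode (k K n : ℕ) : ℕ := ∑ t ∈ Finset.range n, phiIncr k K t

theorem phiIncr_mul_add {m j : ℕ} (hj : j < k) (t : ℕ) :
    phiIncr k (k * m + j) t =
      (j - 1) * (m.choose t * (k - 1) ^ t) + m.choose (t + 1) * (k - 1) ^ (t + 1) := by
  rw [phiIncr, mul_add_mod_of_lt hj, mul_add_div_of_lt hj]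

theorem phiIncr_mono {K K' : ℕ} (hKK' : K ≤ K') (t : ℕ) :
    phiIncr k K t ≤ phiIncr k K' t := by
  have hdiv := Nat.div_le_div_right (c := k) hKK'
  rcases hdiv.eq_or_lt with hq | hq
  · have hr : K % k ≤ K' % k := by
      have := Nat.div_add_mod K k
      have := Nat.div_add_mod K' k
      rw [hq] at *
      omega
    rw [phiIncr, phiIncr, hq]
    gcongr
  · have hr : K % k - 1 ≤ k - 1 := by
      have : 0 < k := Nat.pos_of_ne_zero fun h0 => by simp [h0] at hq
      have := Nat.mod_lt K this
      omega
    calc phiIncr k K t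
        ≤ (k - 1) * ((K / k).choose t * (k - 1) ^ t) +
            (K / k).choose (t + 1) * (k - 1) ^ (t + 1) := by
          rw [phiIncr]; gcongr
      _ = (K / k + 1).choose (t + 1) * (k - 1) ^ (t + 1) := by
          rw [Nat.choose_succ_succ']; ring
      _ ≤ (K' / k).choose (t + 1) * (k - 1) ^ (t + 1) := by gcongr; omega
      _ ≤ phiIncr k K' t := Nat.le_add_left _ _

theorem phiCode_succ (K n : ℕ) : phiCode k K (n + 1) = phiCode k K n + phiIncr k K n :=
  Finset.sum_range_succ _ _

theorem phiCode_mono (K : ℕ) {n n' : ℕ} (h : n ≤ n') : phiCode k K n ≤ phiCode k K n' :=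
  Finset.sum_le_sum_of_subset (Finset.range_subset_range.2 h)

theorem phiCode_one (hk : 2 ≤ k) (n : ℕ) : phiCode k 1 n = 0 := by
  refine Finset.sum_eq_zero fun t _ => ?_
  simpa using phiIncr_mul_add (k := k) (m := 0) (j := 1) (by omega) t

theorem phiCode_add_phiCode_succ_le {K K' : ℕ} (hKK' : K ≤ K') (c : ℕ) :
    phiCode k K' c + phiCode k K (c + 1) ≤ phiCode k K c + phiCode k K' (c + 1) := by
  rw [phiCode_succ, phiCode_succ]
  have := phiIncr_mono (k := k) hKK' c
  omega

theorem phiCode_succ_of_phiIncr {K r s : ℕ} (h₀ : phiIncr k K 0 = phiIncr k r 0 + 1)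
    (h : ∀ t, phiIncr k K (t + 1) = phiIncr k s t + phiIncr k r (t + 1)) (n : ℕ) :
    phiCode k K (n + 1) = phiCode k s n + phiCode k r (n + 1) + 1 := by
  simp only [phiCode, Finset.sum_range_succ' _ n, h₀, h, Finset.sum_add_distrib]
  ring

theorem phiCode_steal (hk : 2 ≤ k) {K : ℕ} (hK : K % k ≠ 0) (hK1 : K ≠ 1) (n : ℕ) :
    phiCode k K (n + 1) =
      phiCode k (stolenCode k K) n + phiCode k (remCode k K) (n + 1) + 1 := by
  rcases code_cases hk hK hK1 with ⟨m, j, hj, hjk, rfl, hr, hs⟩ | ⟨m, rfl, hr, hs⟩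
  · obtain ⟨i, rfl⟩ : ∃ i, j = i + 2 := ⟨j - 2, by omega⟩
    rw [hr, hs, show i + 2 - 1 = i + 1 by omega]
    refine phiCode_succ_of_phiIncr ?_ (fun t => ?_) n
    · rw [phiIncr_mul_add hjk, phiIncr_mul_add (by omega)]
      simp only [Nat.add_one_sub_one, Nat.choose_zero_right, Nat.choose_one_right, pow_zero,
        pow_one, mul_one, zero_add, add_tsub_cancel_right]
      ring
    · rw [phiIncr_mul_add hjk, phiIncr_mul_add (by omega), phiIncr_mul_add (by omega)]
      simp only [Nat.add_one_sub_one, tsub_self, zero_mul, zero_add, add_tsub_cancel_right]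
      ring
  · obtain ⟨i, rfl⟩ : ∃ i, k = i + 2 := ⟨k - 2, by omega⟩
    rw [hr, hs, show i + 2 - 1 = i + 1 by omega]
    refine phiCode_succ_of_phiIncr ?_ (fun t => ?_) n
    · rw [phiIncr_mul_add (by omega), phiIncr_mul_add (by omega)]
      simp only [tsub_self, Nat.choose_zero_right, Nat.add_one_sub_one, pow_zero, mul_one,
        zero_add, Nat.choose_one_right, pow_one, add_tsub_cancel_right]
      ring
    · rw [phiIncr_mul_add (by omega), phiIncr_mul_add (by omega), phiIncr_mul_add (by omega),
        Nat.choose_succ_succ' m (t + 1)]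
      simp only [tsub_self, Nat.add_one_sub_one, zero_mul, zero_add, add_tsub_cancel_right]
      ring

def phiList (k : ℕ) : ℕ → List ℕ → ℕ
  | _, [] => 0
  | c, K :: l => phiCode k K c + phiList k (c + 1) l

theorem phiList_append_cons (c : ℕ) (A : List ℕ) (x : ℕ) (B : List ℕ) :
    phiList k c (A ++ x :: B) =
      phiList k c A + phiCode k x (c + A.length) + phiList k (c + A.length + 1) B := by
  induction A generalizing c with
  | nil => simp [phiList]
  | cons y A ih =>
    simp only [List.cons_append, phiList, ih, List.length_cons]
    rw [show c + 1 + A.length = c + (A.length + 1) by omega]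
    ring

theorem phiList_replicate_one (hk : 2 ≤ k) (c n : ℕ) :
    phiList k c (List.replicate n 1) = 0 := by
  induction n generalizing c with
  | zero => rfl
  | succ n ih => simp [List.replicate_succ, phiList, ih, phiCode_one hk]

theorem phiList_ofFn (c : ℕ) {P : ℕ} (f : Fin P → ℕ) :
    phiList k c (List.ofFn f) = ∑ i : Fin P, phiCode k (f i) (c + i) := by
  induction P generalizing c with
  | zero => rfl
  | succ P ih =>
    rw [List.ofFn_succ, phiList, ih, Fin.sum_univ_succ]
    simp only [Fin.val_zero, Fin.val_succ, add_zero, add_assoc, add_comm 1]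

theorem phiList_append_cons_le (c : ℕ) {A : List ℕ} {x : ℕ} (hx : ∀ y ∈ A, x ≤ y)
    (B : List ℕ) : phiList k c (A ++ x :: B) ≤ phiList k c (x :: (A ++ B)) := by
  induction A generalizing c with
  | nil => rfl
  | cons y A ih =>
    have hswap := phiCode_add_phiCode_succ_le (k := k) (hx y List.mem_cons_self) c
    have hA := ih (c + 1) fun z hz => hx z (List.mem_cons_of_mem y hz)
    simp only [List.cons_append, phiList] at hA ⊢
    omega

theorem phiList_le_of_perm_of_sorted (c : ℕ) {l l' : List ℕ} (hperm : l.Perm l')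
    (hsort : l'.Pairwise (· ≤ ·)) : phiList k c l ≤ phiList k c l' := by
  induction l' generalizing l c with
  | nil => rw [hperm.eq_nil]
  | cons x l' ih =>
    obtain ⟨A, B, rfl⟩ := List.append_of_mem (hperm.mem_iff.2 List.mem_cons_self)
    have hx : ∀ y ∈ A, x ≤ y := fun y hy => by
      rcases List.mem_cons.1 (hperm.subset (List.mem_append_left _ hy)) with rfl | hy'
      · rfl
      · exact List.rel_of_pairwise_cons hsort hy'
    have hAB : (A ++ B).Perm l' := (List.perm_middle.symm.trans hperm).cons_inv
    calc phiList k c (A ++ x :: B) ≤ phiList k c (x :: (A ++ B)) := phiList_append_cons_le c hx B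
      _ ≤ phiList k c (x :: l') := by
        simp only [phiList]
        exact Nat.add_le_add_left (ih (c + 1) hAB hsort.of_cons) _

theorem rStealStep_map_actOf (hk : 2 ≤ k) {M : Multiset ℕ} (hM : ∀ K ∈ M, K % k ≠ 0)
    {S' : Multiset RTree} (h : RStealStep (M.map (actOf k)) S') :
    ∃ q p D, M = q ::ₘ p ::ₘ D ∧ p ≠ 1 ∧
      S' = (stolenCode k p ::ₘ remCode k p ::ₘ D).map (actOf k) := by
  classical
  obtain ⟨U, T, r, s, S₀, hS, hsteal, rfl⟩ := rStealStep_iff.1 h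
  obtain ⟨q, hq, rfl, hM'⟩ := (Multiset.map_eq_cons _ _ _ _).2 hS
  obtain ⟨p, hp, rfl, hD⟩ := (Multiset.map_eq_cons _ _ _ _).2 hM'
  have hp1 : p ≠ 1 := by
    rintro rfl
    exact RTree.not_steal_leaf r s (actOf_one hk ▸ hsteal)
  obtain ⟨rfl, rfl⟩ := hsteal.unique (actOf_steal hk (hM p (Multiset.mem_of_mem_erase hp)) hp1)
  refine ⟨q, p, (M.erase q).erase p, ?_, hp1, ?_⟩
  · rw [Multiset.cons_erase hp, Multiset.cons_erase hq]
  · rw [Multiset.map_cons, Multiset.map_cons, hD, Multiset.cons_swap]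

theorem phiList_lt_of_steal (hk : 2 ≤ k) {p q : ℕ} (hp : p % k ≠ 0) (hp1 : p ≠ 1)
    {D : Multiset ℕ} {l l' : List ℕ} (hl : l.Pairwise (· ≤ ·))
    (hlD : (l : Multiset ℕ) = q ::ₘ p ::ₘ D) (hl' : l'.Pairwise (· ≤ ·))
    (hl'D : (l' : Multiset ℕ) = stolenCode k p ::ₘ remCode k p ::ₘ D) (c : ℕ) :
    phiList k c l' < phiList k c l := by
  obtain ⟨A, C, B, rfl⟩ := List.exists_eq_append_cons_append_cons_of_pairwise hl'
    (stolenCode_le_remCode hk hp hp1) hl'D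
  have hcoe (x y : ℕ) : ((A ++ x :: (C ++ y :: B) : List ℕ) : Multiset ℕ) =
      x ::ₘ y ::ₘ (A + C + B : Multiset ℕ) := by
    simp only [← Multiset.coe_add, ← Multiset.cons_coe, Multiset.add_cons, add_assoc]
  rw [hcoe, Multiset.cons_inj_right, Multiset.cons_inj_right] at hl'D
  have hperm : (A ++ q :: (C ++ p :: B)).Perm l := by
    rw [← Multiset.coe_eq_coe, hcoe, hl'D, hlD]
  refine lt_of_lt_of_le ?_ (phiList_le_of_perm_of_sorted c hperm hl)
  have hsplit := phiCode_steal hk hp hp1 (c + A.length + C.length)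
  have hmono := phiCode_mono (k := k) (stolenCode k p) (Nat.le_add_right (c + A.length) C.length)
  simp only [phiList_append_cons]
  rw [show c + A.length + 1 + C.length = c + A.length + C.length + 1 by omega]
  omega

theorem le_phiList_of_rStealSeq (hk : 2 ≤ k) (n : ℕ) {l : List ℕ}
    (hl : l.Pairwise (· ≤ ·)) (hv : ∀ K ∈ l, K % k ≠ 0)
    (h : RStealSeq n ((l : Multiset ℕ).map (actOf k))) :
    n ≤ phiList k 0 l := by
  induction n generalizing l with
  | zero => exact Nat.zero_le _
  | succ n ih =>
    obtain ⟨S', hstep, hseq⟩ := h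
    obtain ⟨q, p, D, hlD, hp1, rfl⟩ :=
      rStealStep_map_actOf hk (fun K hK => hv K (Multiset.mem_coe.1 hK)) hstep
    have hp : p % k ≠ 0 := hv p (by simp [← Multiset.mem_coe, hlD])
    have hM : ∀ K ∈ stolenCode k p ::ₘ remCode k p ::ₘ D, K % k ≠ 0 := by
      simp only [Multiset.mem_cons]
      rintro K (rfl | rfl | hK)
      · exact stolenCode_mod_ne_zero hk hp hp1
      · exact remCode_mod_ne_zero hk hp hp1
      · exact hv K (by simp [← Multiset.mem_coe, hlD, hK])
    have hn := ih (l := (stolenCode k p ::ₘ remCode k p ::ₘ D).sort (· ≤ ·))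
      (Multiset.pairwise_sort _ _) (fun K hK => hM K ((Multiset.mem_sort _).1 hK))
      (by rwa [Multiset.sort_eq])
    have hlt := phiList_lt_of_steal hk hp hp1 hl hlD (Multiset.pairwise_sort _ _)
      (Multiset.sort_eq _ _) 0
    omega

/-- Exhausting the tree of code `K` with the thieves `S` takes `phiCode k K (card S)` steals and
leaves `card S + 1` trees, whatever they are. -/
theorem rStealSeq_phiCode_add (hk : 2 ≤ k) {K : ℕ} (hK : K % k ≠ 0) {m : ℕ}
    (S R : Multiset RTree) (hcont : ∀ F, F.card = S.card + 1 → RStealSeq m (F + R)) :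
    RStealSeq (phiCode k K S.card + m) (actOf k K ::ₘ S + R) := by
  induction K using Nat.strong_induction_on generalizing S R m with
  | _ K ih =>
    by_cases hK1 : K = 1
    · subst hK1
      rw [phiCode_one hk, zero_add]
      exact hcont _ (Multiset.card_cons _ _)
    induction S using Multiset.induction_on with
    | empty => simpa [phiCode] using hcont {actOf k K} rfl
    | cons V S _ =>
      set r := remCode k K
      set s := stolenCode k K
      rw [Multiset.card_cons, phiCode_steal hk hK hK1,
        show phiCode k s S.card + phiCode k r (S.card + 1) + 1 + m
          = phiCode k s S.card + (phiCode k r (S.card + 1) + m) + 1 by ring]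
      refine ⟨actOf k s ::ₘ S + actOf k r ::ₘ R,
        rStealStep_iff.2
          ⟨V, actOf k K, actOf k r, actOf k s, S + R, ?_, actOf_steal hk hK hK1, ?_⟩,
        ih s (stolenCode_lt hk hK hK1) (stolenCode_mod_ne_zero hk hK hK1) S _ fun F hF => ?_⟩
      · simp [Multiset.cons_swap]
      · simp
      · rw [Multiset.add_cons, ← Multiset.cons_add, ← hF]
        exact ih r (remCode_lt hk hK hK1) (remCode_mod_ne_zero hk hK hK1) F R fun F' hF' =>
          hcont F' (by rw [hF', hF, Multiset.card_cons])

theorem rStealSeq_phiList (hk : 2 ≤ k) (l : List ℕ) (hv : ∀ K ∈ l, K % k ≠ 0)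
    (S : Multiset RTree) :
    RStealSeq (phiList k S.card l) ((l : Multiset ℕ).map (actOf k) + S) := by
  induction l generalizing S with
  | nil => trivial
  | cons K l ih =>
    rw [phiList, ← Multiset.cons_coe, Multiset.map_cons, Multiset.cons_add, add_comm _ S,
      ← Multiset.cons_add]
    exact rStealSeq_phiCode_add hk (hv K List.mem_cons_self) S _ fun F hF => by
      rw [add_comm F, ← hF]
      exact ih (fun K' hK' => hv K' (List.mem_cons_of_mem K hK')) F

theorem stealsR_map_actOf (hk : 2 ≤ k) {l : List ℕ} (hl : l.Pairwise (· ≤ ·))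
    (hv : ∀ K ∈ l, K % k ≠ 0) : stealsR ((l : Multiset ℕ).map (actOf k)) = phiList k 0 l :=
  IsGreatest.csSup_eq
    ⟨by simpa using rStealSeq_phiList hk l hv 0,
      fun n hn => le_phiList_of_rStealSeq hk n hl hv hn⟩

theorem PhiR_actOf (hk : 2 ≤ k) {K : ℕ} (hK : K % k ≠ 0) (n : ℕ) :
    PhiR (actOf k K) n = phiCode k K n := by
  have hK0 : 1 ≤ K := Nat.pos_of_ne_zero fun h => by simp [h] at hK
  have hl : (List.replicate n 1 ++ [K]).Pairwise (· ≤ ·) := by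
    simp [List.pairwise_append, List.pairwise_replicate, hK0]
  have hv : ∀ K' ∈ List.replicate n 1 ++ [K], K' % k ≠ 0 := by
    simp only [List.mem_append, List.mem_replicate, List.mem_singleton]
    rintro K' (⟨-, rfl⟩ | rfl)
    · rw [Nat.mod_eq_of_lt (by omega)]; omega
    · exact hK
  have hM : actOf k K ::ₘ Multiset.replicate n (RTree.node []) =
      ((List.replicate n 1 ++ [K] : List ℕ) : Multiset ℕ).map (actOf k) := by
    rw [← Multiset.coe_add, Multiset.map_add, Multiset.coe_replicate, Multiset.map_replicate,
      actOf_one hk, add_comm]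
    rfl
  rw [PhiR, hM, stealsR_map_actOf hk hl hv, phiList_append_cons, phiList_replicate_one hk]
  simp [phiList]

end

theorem mul_add_le_mul_add_of_mul_pow_le {k b b' h h' : ℕ} (hk : 2 ≤ k) (hb : 1 ≤ b)
    (hbk : b < k) (hbk' : b' < k) (hle : b * k ^ h ≤ b' * k ^ h') :
    k * h + b ≤ k * h' + b' := by
  rcases lt_trichotomy h h' with hlt | rfl | hgt
  · have : k * (h + 1) ≤ k * h' := Nat.mul_le_mul_left k hlt
    rw [mul_add_one] at this
    omega
  · have := Nat.le_of_mul_le_mul_right hle (by positivity)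
    omega
  · have : k ^ (h' + 1) ≤ k ^ h := Nat.pow_le_pow_right (by omega) hgt
    have : b' * k ^ h' < k ^ (h' + 1) := by
      rw [pow_succ']
      exact Nat.mul_lt_mul_of_pos_right hbk' (by positivity)
    have : k ^ h ≤ b * k ^ h := Nat.le_mul_of_pos_left _ hb
    omega

theorem steals_sorted_ACT_general (k P : ℕ) (hk : 2 ≤ k)
    (h b : Fin P → ℕ) (hb1 : ∀ i, 1 ≤ b i) (hbk : ∀ i, b i ≤ k - 1)
    (hsorted : ∀ i j : Fin P, i ≤ j → b i * k ^ h i ≤ b j * k ^ h j) :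
    stealsR (Multiset.map (fun i => ACT (b i) k (h i)) Finset.univ.val) =
      ∑ i : Fin P, PhiR (ACT (b i) k (h i)) i.val := by
  have hbk' : ∀ i, b i < k := fun i => by have := hbk i; omega
  set code : Fin P → ℕ := fun i => k * h i + b i
  have hACT : ∀ i, ACT (b i) k (h i) = actOf k (code i) := fun i => (actOf_mul_add (hbk' i)).symm
  have hv : ∀ i, code i % k ≠ 0 := fun i => by
    simp only [code, mul_add_mod_of_lt (hbk' i)]
    exact Nat.one_le_iff_ne_zero.1 (hb1 i)
  have hmono : Monotone code := fun i j hij =>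
    mul_add_le_mul_add_of_mul_pow_le hk (hb1 i) (hbk' i) (hbk' j) (hsorted i j hij)
  calc stealsR (Multiset.map (fun i => ACT (b i) k (h i)) Finset.univ.val)
      = stealsR ((List.ofFn code : Multiset ℕ).map (actOf k)) := by
        simp only [hACT, Fin.univ_val_map, Multiset.map_coe, List.map_ofFn, Function.comp_def]
    _ = phiList k 0 (List.ofFn code) :=
        stealsR_map_actOf hk (List.sortedLE_ofFn_iff.2 hmono).pairwise
          (by simpa [List.mem_ofFn] using hv)
    _ = ∑ i : Fin P, PhiR (ACT (b i) k (h i)) i.val := by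
        simp [phiList_ofFn, hACT, PhiR_actOf hk (hv _)]

theorem steals_sorted_ACT (k P : ℕ) (hk : 2 ≤ k) (hP : 1 ≤ P)
    (h b : Fin P → ℕ) (hb1 : ∀ i, 1 ≤ b i) (hbk : ∀ i, b i ≤ k - 1)
    (hsorted : ∀ i j : Fin P, i ≤ j → b i * k ^ h i ≤ b j * k ^ h j) :
    stealsR (Multiset.map (fun i => ACT (b i) k (h i)) Finset.univ.val) =
      ∑ i : Fin P, PhiR (ACT (b i) k (h i)) i.val :=
  steals_sorted_ACT_general k P hk h b hb1 hbk hsorted
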